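/- Let (f, φ) be a gluing morphism from (M, Σ; Σ₁, Σ₂) to (M', Σ'), and let (g, ψ) be a gluing morphism from (M', Σ'; Σ₁', Σ₂') to (M'', Σ''), where Σ₁', Σ₂' are disjoint nonempty subsets of Σ'. Set Σ₃ = f⁻¹(Σ₁') and Σ₄ = f⁻¹(Σ₂') (as subsets of M), and define θ : Σ₁ ∪ Σ₃ → Σ₂ ∪ Σ₄ by θ(x) = φ(x) for x ∈ Σ₁ and θ(x) = (f|_{Σ₄})⁻¹(ψ(f(x))) for x ∈ Σ₃. Then Σ₁ ∪ Σ₃ and Σ₂ ∪ Σ₄ are disjoint nonempty subsets of Σ, θ is a well-defined bijection from Σ₁ ∪ Σ₃ onto Σ₂ ∪ Σ₄, and the pair (g ∘ f, θ) is a gluing morphism from (M, Σ; Σ₁ ∪ Σ₃, Σ₂ ∪ Σ₄) to (M'', Σ''). -/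
import Mathlib


/-- A gluing morphism from `(M, S; S1, S2)` to `(M', S')` in the sense of
Picken–Semião: `f : M → M'` glues the two disjoint nonempty "boundary"
components `S1, S2 ⊆ S` together via the bijection `φ : S1 → S2`
(represented as a map `φ : M → M` restricting to a bijection of `S1` onto `S2`). -/
structure IsGluingMorphism {M M' : Type*} (S S1 S2 : Set M)
    (S' : Set M') (f : M → M') (φ : M → M) : Prop where
  sub1 : S1 ⊆ S
  sub2 : S2 ⊆ S
  disj : Disjoint S1 S2
  ne1 : S1.Nonempty
  ne2 : S2.Nonempty
  phiBij : Set.BijOn φ S1 S2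
  surj : Function.Surjective f
  injOnCompl : Set.InjOn f (S1 ∪ S2)ᶜ
  bijBoundary : Set.BijOn f (S \ (S1 ∪ S2)) S'
  glue : ∀ x ∈ S1, f (φ x) = f x
  injOnS1 : Set.InjOn f S1
  imDisj : Disjoint (f '' S1) (f '' (S1 ∪ S2)ᶜ)

attribute [local instance] Classical.propDecidable

/-- Composition of gluing morphisms: gluing in two stages via `(f, φ)` and then
`(g, ψ)` is a gluing morphism `(g ∘ f, θ)` with gluing sets `S1 ∪ f⁻¹(S1')` and
`S2 ∪ f⁻¹(S2')`, where `θ` is `φ` on `S1` and `(f|_{f⁻¹(S2')})⁻¹ ∘ ψ ∘ f` on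
`f⁻¹(S1')`.  In particular the two gluing sets are disjoint nonempty subsets of
`S` and `θ` restricts to a bijection between them (these facts are fields of
the `IsGluingMorphism` structure). -/
theorem gluingMorphism_comp {M M' M'' : Type*} [Nonempty M]
    (S S1 S2 : Set M) (S' S1' S2' : Set M') (S'' : Set M'')
    (f : M → M') (φ : M → M) (g : M' → M'') (ψ : M' → M')
    (hf : IsGluingMorphism S S1 S2 S' f φ)
    (hg : IsGluingMorphism S' S1' S2' S'' g ψ) :
    IsGluingMorphism S (S1 ∪ f ⁻¹' S1') (S2 ∪ f ⁻¹' S2') S'' (g ∘ f)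
      (fun x => if x ∈ S1 then φ x
        else Function.invFunOn f (f ⁻¹' S2') (ψ (f x))) := by
  classical
  set S3 := f ⁻¹' S1' with hS3def
  set S4 := f ⁻¹' S2' with hS4def
  set F : M → M := fun x => if x ∈ S1 then φ x
    else Function.invFunOn f S4 (ψ (f x)) with hFdef
  have hS'sub : S' ⊆ f '' (S \ (S1 ∪ S2)) := hf.bijBoundary.surjOn
  have hkey : ∀ x ∈ S1 ∪ S2, f x ∉ S' := by
    intro x hx hx'
    obtain ⟨y, hy, hyx⟩ := hS'sub hx'
    obtain ⟨w, hw, hwx⟩ : ∃ w ∈ S1, f x = f w := by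
      rcases hx with h | h
      · exact ⟨x, h, rfl⟩
      · obtain ⟨w, hw, hwx⟩ := hf.phiBij.surjOn h
        exact ⟨w, hw, by rw [← hwx, hf.glue w hw]⟩
    have h1 : f w ∈ f '' S1 := ⟨w, hw, rfl⟩
    have h2 : f w ∈ f '' (S1 ∪ S2)ᶜ := ⟨y, fun hc => hy.2 hc, by rw [hyx, hwx]⟩
    exact Set.disjoint_left.1 hf.imDisj h1 h2
  have hkey' : ∀ x ∈ S1 ∪ S2, f x ∉ S1' ∪ S2' := by
    intro x hx h
    exact hkey x hx (by rcases h with h | h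
                        exacts [hg.sub1 h, hg.sub2 h])
  have hS3c : S3 ⊆ S \ (S1 ∪ S2) := by
    intro x hx
    have hfx : f x ∈ S' := hg.sub1 hx
    obtain ⟨y, hy, hyx⟩ := hS'sub hfx
    have hnx : x ∉ S1 ∪ S2 := fun h => hkey x h hfx
    have hxy : y = x := hf.injOnCompl hy.2 hnx hyx
    exact ⟨hxy ▸ hy.1, hnx⟩
  have hS4c : S4 ⊆ S \ (S1 ∪ S2) := by
    intro x hx
    have hfx : f x ∈ S' := hg.sub2 hx
    obtain ⟨y, hy, hyx⟩ := hS'sub hfx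
    have hnx : x ∉ S1 ∪ S2 := fun h => hkey x h hfx
    have hxy : y = x := hf.injOnCompl hy.2 hnx hyx
    exact ⟨hxy ▸ hy.1, hnx⟩
  have hS2'img : S2' ⊆ f '' S4 := by
    intro y hy
    obtain ⟨x, hx, hxy⟩ := hS'sub (hg.sub2 hy)
    exact ⟨x, show f x ∈ S2' from hxy ▸ hy, hxy⟩
  have hFS1 : ∀ x ∈ S1, F x = φ x := fun x hx => if_pos hx
  have hFS3 : ∀ x ∈ S3, F x ∈ S4 ∧ f (F x) = ψ (f x) := by
    intro x hx
    have hx' : x ∉ S1 := fun h => (hS3c hx).2 (Or.inl h)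
    have hψ : ψ (f x) ∈ S2' := hg.phiBij.mapsTo hx
    have hmem : ψ (f x) ∈ f '' S4 := hS2'img hψ
    simp only [hFdef, if_neg hx']
    exact ⟨Function.invFunOn_mem hmem, Function.invFunOn_eq hmem⟩
  -- complement membership facts
  have hcompl : ∀ x, x ∉ (S1 ∪ S3) ∪ (S2 ∪ S4) → x ∉ S1 ∪ S2 ∧ f x ∉ S1' ∪ S2' := by
    intro x hx
    constructor
    · rintro (h | h)
      · exact hx (Or.inl (Or.inl h))
      · exact hx (Or.inr (Or.inl h))
    · rintro (h | h)
      · exact hx (Or.inl (Or.inr h))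
      · exact hx (Or.inr (Or.inr h))
  refine { sub1 := ?_, sub2 := ?_, disj := ?_, ne1 := ?_, ne2 := ?_, phiBij := ?_,
           surj := ?_, injOnCompl := ?_, bijBoundary := ?_, glue := ?_,
           injOnS1 := ?_, imDisj := ?_ }
  · exact Set.union_subset hf.sub1 (fun x hx => (hS3c hx).1)
  · exact Set.union_subset hf.sub2 (fun x hx => (hS4c hx).1)
  · rw [Set.disjoint_left]
    rintro a (ha | ha) (hb | hb)
    · exact Set.disjoint_left.1 hf.disj ha hb
    · exact (hS4c hb).2 (Or.inl ha)
    · exact (hS3c ha).2 (Or.inr hb)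
    · exact Set.disjoint_left.1 hg.disj ha hb
  · obtain ⟨x, hx⟩ := hf.ne1; exact ⟨x, Or.inl hx⟩
  · obtain ⟨x, hx⟩ := hf.ne2; exact ⟨x, Or.inl hx⟩
  · refine ⟨?_, ?_, ?_⟩
    · rintro x (hx | hx)
      · exact Or.inl (hFS1 x hx ▸ hf.phiBij.mapsTo hx)
      · exact Or.inr (hFS3 x hx).1
    · rintro a ha b hb heq
      rcases ha with ha | ha <;> rcases hb with hb | hb
      · exact hf.phiBij.injOn ha hb (by rw [← hFS1 a ha, ← hFS1 b hb, heq])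
      · exfalso
        have h1 : F a ∈ S2 := hFS1 a ha ▸ hf.phiBij.mapsTo ha
        exact (hS4c (hFS3 b hb).1).2 (Or.inr (heq ▸ h1))
      · exfalso
        have h1 : F b ∈ S2 := hFS1 b hb ▸ hf.phiBij.mapsTo hb
        exact (hS4c (hFS3 a ha).1).2 (Or.inr (heq ▸ h1))
      · have h1 : ψ (f a) = ψ (f b) := by
          rw [← (hFS3 a ha).2, ← (hFS3 b hb).2, heq]
        have h2 : f a = f b := hg.phiBij.injOn ha hb h1
        exact hf.injOnCompl (hS3c ha).2 (hS3c hb).2 h2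
    · rintro y (hy | hy)
      · obtain ⟨x, hx, hxy⟩ := hf.phiBij.surjOn hy
        exact ⟨x, Or.inl hx, (hFS1 x hx).trans hxy⟩
      · obtain ⟨w, hw, hwy⟩ := hg.phiBij.surjOn hy
        obtain ⟨x, hx, hxw⟩ := hS'sub (hg.sub1 hw)
        have hx3 : x ∈ S3 := by show f x ∈ S1'; rw [hxw]; exact hw
        refine ⟨x, Or.inr hx3, ?_⟩
        have h1 : f (F x) = f y := by
          rw [(hFS3 x hx3).2, hxw, hwy]
        exact hf.injOnCompl (hS4c (hFS3 x hx3).1).2 (hS4c hy).2 h1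
  · exact hg.surj.comp hf.surj
  · intro a ha b hb heq
    have ha' := hcompl a ha
    have hb' := hcompl b hb
    have h1 : f a = f b := hg.injOnCompl ha'.2 hb'.2 heq
    exact hf.injOnCompl ha'.1 hb'.1 h1
  · have hfbij : Set.BijOn f (S \ ((S1 ∪ S3) ∪ (S2 ∪ S4))) (S' \ (S1' ∪ S2')) := by
      refine ⟨?_, ?_, ?_⟩
      · intro x hx
        have h := hcompl x hx.2
        exact ⟨hf.bijBoundary.mapsTo ⟨hx.1, h.1⟩, h.2⟩
      · exact hf.injOnCompl.mono (fun x hx => (hcompl x hx.2).1)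
      · intro y hy
        obtain ⟨x, hx, hxy⟩ := hS'sub hy.1
        refine ⟨x, ⟨hx.1, ?_⟩, hxy⟩
        rintro (h | h)
        · rcases h with h | h
          · exact hx.2 (Or.inl h)
          · exact hy.2 (Or.inl (hxy ▸ h))
        · rcases h with h | h
          · exact hx.2 (Or.inr h)
          · exact hy.2 (Or.inr (hxy ▸ h))
    exact hg.bijBoundary.comp hfbij
  · rintro x (hx | hx)
    · show g (f (F x)) = g (f x)
      rw [hFS1 x hx, hf.glue x hx]
    · show g (f (F x)) = g (f x)
      rw [(hFS3 x hx).2, hg.glue (f x) hx]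
  · rintro a ha b hb heq
    rcases ha with ha | ha <;> rcases hb with hb | hb
    · have h1 : f a = f b :=
        hg.injOnCompl (hkey' a (Or.inl ha)) (hkey' b (Or.inl hb)) heq
      exact hf.injOnS1 ha hb h1
    · exfalso
      exact Set.disjoint_left.1 hg.imDisj ⟨f b, hb, heq.symm⟩
        ⟨f a, hkey' a (Or.inl ha), rfl⟩
    · exfalso
      exact Set.disjoint_left.1 hg.imDisj ⟨f a, ha, heq⟩
        ⟨f b, hkey' b (Or.inl hb), rfl⟩
    · have h1 : f a = f b := hg.injOnS1 ha hb heq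
      exact hf.injOnCompl (hS3c ha).2 (hS3c hb).2 h1
  · rw [Set.disjoint_left]
    rintro z ⟨a, ha, rfl⟩ ⟨b, hb, hzb⟩
    simp only [Function.comp_apply] at hzb
    have hb' := hcompl b hb
    rcases ha with ha | ha
    · have h1 : f a ∉ S1' ∪ S2' := hkey' a (Or.inl ha)
      have h2 : f a = f b := hg.injOnCompl h1 hb'.2 hzb.symm
      exact Set.disjoint_left.1 hf.imDisj ⟨a, ha, rfl⟩ ⟨b, hb'.1, h2.symm⟩
    · exact Set.disjoint_left.1 hg.imDisj ⟨f a, ha, rfl⟩ ⟨f b, hb'.2, hzb⟩
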